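/- arXiv:2306.13756 — 4 statements merged into one kernel-verified Lean document; each statement's English description precedes it below -/
import Mathlib

section
/- The weak head reduction of EPCF is deterministic: if an EPCF term M reduces in one weak head step to both N1 and N2, then N1 = N2. -/
inductive Tm : Type
  | var : String → Tm
  | app : Tm → Tm → Tm
  | lam : String → Tm → Tm
  | fixp : Tm → Tm
  | esub : Tm → String → Tm → Tm
  | zero : Tm
  | pred : Tm → Tm
  | succ : Tm → Tm
  | ifz : Tm → Tm → Tm → Tm

/-- Numerals `n̲ = succⁿ 0`. -/
def numeral : ℕ → Tm
  | 0 => Tm.zero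
  | n + 1 => Tm.succ (numeral n)

/-- Free variables of an EPCF term. -/
def fv : Tm → Finset String
  | .var x => {x}
  | .app M N => fv M ∪ fv N
  | .lam x M => fv M \ {x}
  | .fixp M => fv M
  | .esub M x N => (fv M \ {x}) ∪ fv N
  | .zero => ∅
  | .pred M => fv M
  | .succ M => fv M
  | .ifz L M N => fv L ∪ fv M ∪ fv N

/-- Substitution `M[x := Q]` (capture-free whenever `Q` is closed, which is
the only situation in which it is used for programs). -/
def subst (x : String) (Q : Tm) : Tm → Tm
  | .var y => if y = x then Q else .var y
  | .app M N => .app (subst x Q M) (subst x Q N)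
  | .lam y M => if y = x then .lam y M else .lam y (subst x Q M)
  | .fixp M => .fixp (subst x Q M)
  | .esub M y N =>
      if y = x then .esub M y (subst x Q N)
      else .esub (subst x Q M) y (subst x Q N)
  | .zero => .zero
  | .pred M => .pred (subst x Q M)
  | .succ M => .succ (subst x Q M)
  | .ifz L M N => .ifz (subst x Q L) (subst x Q M) (subst x Q N)

/-- PCF terms are the EPCF terms without explicit substitutions. -/
def IsPCF : Tm → Prop
  | .var _ => True
  | .app M N => IsPCF M ∧ IsPCF N
  | .lam _ M => IsPCF M
  | .fixp M => IsPCF M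
  | .esub _ _ _ => False
  | .zero => True
  | .pred M => IsPCF M
  | .succ M => IsPCF M
  | .ifz L M N => IsPCF L ∧ IsPCF M ∧ IsPCF N

/-- All explicit substitutions occurring in the term have closed right-hand sides. -/
def closedSubs : Tm → Prop
  | .var _ => True
  | .app M N => closedSubs M ∧ closedSubs N
  | .lam _ M => closedSubs M
  | .fixp M => closedSubs M
  | .esub M _ N => closedSubs M ∧ closedSubs N ∧ fv N = ∅
  | .zero => True
  | .pred M => closedSubs M
  | .succ M => closedSubs M
  | .ifz L M N => closedSubs L ∧ closedSubs M ∧ closedSubs N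

/-- An EPCF program: closed, and all explicit substitutions have closed bodies. -/
def IsProgram (M : Tm) : Prop := fv M = ∅ ∧ closedSubs M

/-- The collapse `M↓`, performing all explicit substitutions. -/
def collapse : Tm → Tm
  | .var x => .var x
  | .app M N => .app (collapse M) (collapse N)
  | .lam x M => .lam x (collapse M)
  | .fixp M => .fixp (collapse M)
  | .esub M x N => subst x (collapse N) (collapse M)
  | .zero => .zero
  | .pred M => .pred (collapse M)
  | .succ M => .succ (collapse M)
  | .ifz L M N => .ifz (collapse L) (collapse M) (collapse N)

/-- Lists of explicit substitutions `σ = ⟨N₁/x₁⟩⋯⟨Nₙ/xₙ⟩`. -/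
abbrev Subs := List (String × Tm)

/-- `M^σ`: the term `M` under the list of explicit substitutions `σ`. -/
def applySubs (M : Tm) : Subs → Tm
  | [] => M
  | (x, N) :: σ => applySubs (.esub M x N) σ

def lookupS (x : String) : Subs → Option Tm
  | [] => none
  | (y, N) :: σ => if x = y then some N else lookupS x σ

/-- The variables in `σ` are pairwise distinct. -/
def keysDistinct (σ : Subs) : Prop := (σ.map Prod.fst).Nodup

/-- Computation redexes of EPCF. -/
inductive CrRedex : Tm → Tm → Prop
  | beta (x : String) (M N : Tm) (σ : Subs) (hk : keysDistinct σ) :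
      CrRedex (.app (applySubs (.lam x M) σ) N) (.esub (applySubs M σ) x N)
  | pred_zero : CrRedex (.pred .zero) .zero
  | pred_succ (n : ℕ) : CrRedex (.pred (numeral (n + 1))) (numeral n)
  | ifz_zero (M N : Tm) : CrRedex (.ifz .zero M N) M
  | ifz_succ (n : ℕ) (M N : Tm) : CrRedex (.ifz (numeral (n + 1)) M N) N
  | fix_unfold (M : Tm) : CrRedex (.fixp M) (.app M (.fixp M))

/-- Percolation redexes of EPCF (the list `σ` is non-empty). -/
inductive PrRedex : Tm → Tm → Prop
  | var_hit (x : String) (N : Tm) (σ : Subs) (hne : σ ≠ []) (hk : keysDistinct σ)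
      (h : lookupS x σ = some N) : PrRedex (applySubs (.var x) σ) N
  | var_miss (x : String) (σ : Subs) (hne : σ ≠ []) (hk : keysDistinct σ)
      (h : lookupS x σ = none) : PrRedex (applySubs (.var x) σ) (.var x)
  | zeroS (σ : Subs) (hne : σ ≠ []) (hk : keysDistinct σ) :
      PrRedex (applySubs .zero σ) .zero
  | appS (M N : Tm) (σ : Subs) (hne : σ ≠ []) (hk : keysDistinct σ) :
      PrRedex (applySubs (.app M N) σ) (.app (applySubs M σ) (applySubs N σ))
  | predS (M : Tm) (σ : Subs) (hne : σ ≠ []) (hk : keysDistinct σ) :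
      PrRedex (applySubs (.pred M) σ) (.pred (applySubs M σ))
  | succS (M : Tm) (σ : Subs) (hne : σ ≠ []) (hk : keysDistinct σ) :
      PrRedex (applySubs (.succ M) σ) (.succ (applySubs M σ))
  | ifzS (L M N : Tm) (σ : Subs) (hne : σ ≠ []) (hk : keysDistinct σ) :
      PrRedex (applySubs (.ifz L M N) σ)
        (.ifz (applySubs L σ) (applySubs M σ) (applySubs N σ))
  | fixS (M : Tm) (σ : Subs) (hne : σ ≠ []) (hk : keysDistinct σ) :
      PrRedex (applySubs (.fixp M) σ) (.fixp (applySubs M σ))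

/-- Evaluation contexts `E ::= □ | E·P | pred E | succ E | ifz E P Q`. -/
inductive ECtx : Type
  | hole : ECtx
  | appL : ECtx → Tm → ECtx
  | pred : ECtx → ECtx
  | succ : ECtx → ECtx
  | ifz : ECtx → Tm → Tm → ECtx

def fill : ECtx → Tm → Tm
  | .hole, M => M
  | .appL E P, M => .app (fill E M) P
  | .pred E, M => .pred (fill E M)
  | .succ E, M => .succ (fill E M)
  | .ifz E P Q, M => .ifz (fill E M) P Q

/-- One computation reduction step (under an evaluation context). -/
def CrStep (M N : Tm) : Prop :=
  ∃ E A B, CrRedex A B ∧ M = fill E A ∧ N = fill E B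

/-- One percolation reduction step (under an evaluation context). -/
def PrStep (M N : Tm) : Prop :=
  ∃ E A B, PrRedex A B ∧ M = fill E A ∧ N = fill E B

/-- One weak head reduction step. -/
def WhStep (M N : Tm) : Prop := CrStep M N ∨ PrStep M N

/-- Multistep weak head reduction. -/
def WhSteps : Tm → Tm → Prop := Relation.ReflTransGen WhStep

/-- PCF weak head redexes. -/
inductive PcfRedex : Tm → Tm → Prop
  | beta (x : String) (P Q : Tm) : PcfRedex (.app (.lam x P) Q) (subst x Q P)
  | fix_unfold (P : Tm) : PcfRedex (.fixp P) (.app P (.fixp P))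
  | pred_zero : PcfRedex (.pred .zero) .zero
  | pred_succ (n : ℕ) : PcfRedex (.pred (numeral (n + 1))) (numeral n)
  | ifz_zero (P Q : Tm) : PcfRedex (.ifz .zero P Q) P
  | ifz_succ (n : ℕ) (P Q : Tm) : PcfRedex (.ifz (numeral (n + 1)) P Q) Q

/-- One PCF weak head reduction step. -/
def PcfStep (M N : Tm) : Prop :=
  ∃ E A B, PcfRedex A B ∧ M = fill E A ∧ N = fill E B

/-- Multistep PCF weak head reduction. -/
def PcfSteps : Tm → Tm → Prop := Relation.ReflTransGen PcfStep

/-!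
A weak head step contracts a redex inside an evaluation context, so determinism follows from two
facts. First, the contractum is a function of the redex: percolation redexes are explicit
substitutions and computation redexes are not, and once the outer substitution list is peeled off,
the contractum is read off the remaining head constructor. Second, a term has at most one
decomposition as a redex in an evaluation context: an evaluation context can only descend into the
function of an application, which in a redex is some `(λx.M)^σ`, or into the argument of `pred` or
the condition of `ifz`, which in a redex is a numeral, and neither of these contains a redex in
evaluation position.
-/

lemma applySubs_append (M : Tm) (σ τ : Subs) :
    applySubs M (σ ++ τ) = applySubs (applySubs M σ) τ := by
  induction σ generalizing M with
  | nil => rfl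
  | cons p σ ih => exact ih _

lemma applySubs_concat (M : Tm) (σ : Subs) (x : String) (N : Tm) :
    applySubs M (σ ++ [(x, N)]) = .esub (applySubs M σ) x N := by
  rw [applySubs_append]; rfl

lemma applySubs_eq_esub_of_ne_nil (M : Tm) {σ : Subs} (hσ : σ ≠ []) :
    ∃ D y P, applySubs M σ = .esub D y P := by
  obtain ⟨τ, ⟨y, P⟩, rfl⟩ := (List.eq_nil_or_concat' σ).resolve_left hσ
  exact ⟨_, y, P, applySubs_concat M τ y P⟩

/-- Splits a term as `C^σ` with `C` not an explicit substitution. -/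
def peel : Tm → Tm × Subs
  | .esub M x N => ((peel M).1, (peel M).2 ++ [(x, N)])
  | T => (T, [])

lemma peel_applySubs (M : Tm) (σ : Subs) :
    peel (applySubs M σ) = ((peel M).1, (peel M).2 ++ σ) := by
  induction σ generalizing M with
  | nil => simp [applySubs]
  | cons p σ ih => simp [applySubs, ih, peel]

def percolate : Tm → Subs → Option Tm
  | .var x, σ => some ((lookupS x σ).getD (.var x))
  | .zero, _ => some .zero
  | .app M N, σ => some (.app (applySubs M σ) (applySubs N σ))
  | .pred M, σ => some (.pred (applySubs M σ))
  | .succ M, σ => some (.succ (applySubs M σ))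
  | .ifz L M N, σ => some (.ifz (applySubs L σ) (applySubs M σ) (applySubs N σ))
  | .fixp M, σ => some (.fixp (applySubs M σ))
  | _, _ => none

def contract : Tm → Option Tm
  | .app L N =>
      match peel L with
      | (.lam x M, σ) => some (.esub (applySubs M σ) x N)
      | _ => none
  | .esub M x N => percolate (peel M).1 ((peel M).2 ++ [(x, N)])
  | .pred .zero => some .zero
  | .pred (.succ M) => some M
  | .ifz .zero M _ => some M
  | .ifz (.succ _) _ N => some N
  | .fixp M => some (.app M (.fixp M))
  | _ => none

lemma contract_applySubs_of_ne_nil (C : Tm) {σ : Subs} (hσ : σ ≠ []) :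
    contract (applySubs C σ) = percolate (peel C).1 ((peel C).2 ++ σ) := by
  obtain ⟨τ, ⟨y, P⟩, rfl⟩ := (List.eq_nil_or_concat' σ).resolve_left hσ
  simp [applySubs_concat, contract, peel_applySubs]

lemma CrRedex.contract_eq {A B : Tm} (h : CrRedex A B) : contract A = some B := by
  cases h <;> simp [contract, peel_applySubs, peel, numeral]

lemma PrRedex.contract_eq {A B : Tm} (h : PrRedex A B) : contract A = some B := by
  cases h <;> simp_all [contract_applySubs_of_ne_nil, peel, percolate]

lemma PrRedex.exists_eq_esub {A B : Tm} (h : PrRedex A B) : ∃ D y P, A = .esub D y P := by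
  cases h <;> exact applySubs_eq_esub_of_ne_nil _ ‹_›

def HeadRedex (A B : Tm) : Prop := CrRedex A B ∨ PrRedex A B

def IsHeadRedex (A : Tm) : Prop := ∃ B, HeadRedex A B

lemma HeadRedex.contract_eq {A B : Tm} (h : HeadRedex A B) : contract A = some B :=
  h.elim CrRedex.contract_eq PrRedex.contract_eq

lemma HeadRedex.unique {A B B' : Tm} (h : HeadRedex A B) (h' : HeadRedex A B') : B = B' :=
  Option.some.inj (h.contract_eq.symm.trans h'.contract_eq)

lemma not_isHeadRedex_of_contract_eq_none {A : Tm} (h : contract A = none) : ¬IsHeadRedex A :=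
  fun ⟨_, hB⟩ => by simp [hB.contract_eq] at h

lemma not_isHeadRedex_applySubs_lam (x : String) (M : Tm) (σ : Subs) :
    ¬IsHeadRedex (applySubs (.lam x M) σ) := by
  apply not_isHeadRedex_of_contract_eq_none
  rcases eq_or_ne σ [] with rfl | hσ
  · rfl
  · simp [contract_applySubs_of_ne_nil _ hσ, peel, percolate]

lemma HeadRedex.exists_lam_of_app {L P B : Tm} (h : HeadRedex (.app L P) B) :
    ∃ x M σ, L = applySubs (.lam x M) σ := by
  obtain h | h := h
  · cases h; exact ⟨_, _, _, rfl⟩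
  · obtain ⟨_, _, _, ⟨⟩⟩ := h.exists_eq_esub

lemma HeadRedex.exists_numeral_of_pred {M B : Tm} (h : HeadRedex (.pred M) B) :
    ∃ n, M = numeral n := by
  obtain h | h := h
  · cases h
    exacts [⟨0, rfl⟩, ⟨_, rfl⟩]
  · obtain ⟨_, _, _, ⟨⟩⟩ := h.exists_eq_esub

lemma HeadRedex.exists_numeral_of_ifz {L M N B : Tm} (h : HeadRedex (.ifz L M N) B) :
    ∃ n, L = numeral n := by
  obtain h | h := h
  · cases h
    exacts [⟨0, rfl⟩, ⟨_, rfl⟩]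
  · obtain ⟨_, _, _, ⟨⟩⟩ := h.exists_eq_esub

lemma numeral_ne_fill (n : ℕ) (E : ECtx) {A : Tm} (hA : IsHeadRedex A) :
    numeral n ≠ fill E A := by
  induction n generalizing E with
  | zero =>
    intro h
    cases E <;> simp only [numeral, fill, reduceCtorEq] at h
    exact not_isHeadRedex_of_contract_eq_none (h ▸ rfl) hA
  | succ n ih =>
    intro h
    cases E <;> simp only [numeral, fill, reduceCtorEq, Tm.succ.injEq] at h
    · exact not_isHeadRedex_of_contract_eq_none (h ▸ rfl) hA
    · exact ih _ h

lemma applySubs_lam_ne_fill (x : String) (M : Tm) (σ : Subs) (E : ECtx) {A : Tm}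
    (hA : IsHeadRedex A) : applySubs (.lam x M) σ ≠ fill E A := by
  intro h
  cases E with
  | hole => exact not_isHeadRedex_applySubs_lam x M σ (h ▸ hA)
  | _ =>
    rcases List.eq_nil_or_concat' σ with rfl | ⟨τ, ⟨y, P⟩, rfl⟩
    all_goals simp [applySubs, applySubs_concat, fill] at h

lemma eq_hole_of_isHeadRedex_fill {E : ECtx} {A : Tm} (hEA : IsHeadRedex (fill E A))
    (hA : IsHeadRedex A) : E = .hole := by
  obtain ⟨B, hB⟩ := hEA
  cases E with
  | hole => rfl
  | appL E P =>
    obtain ⟨x, M, σ, hL⟩ := hB.exists_lam_of_app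
    exact absurd hL.symm (applySubs_lam_ne_fill x M σ E hA)
  | pred E =>
    obtain ⟨n, hn⟩ := hB.exists_numeral_of_pred
    exact absurd hn.symm (numeral_ne_fill n E hA)
  | succ E => exact absurd ⟨B, hB⟩ (not_isHeadRedex_of_contract_eq_none rfl)
  | ifz E P Q =>
    obtain ⟨n, hn⟩ := hB.exists_numeral_of_ifz
    exact absurd hn.symm (numeral_ne_fill n E hA)

lemma fill_inj_of_isHeadRedex {E E' : ECtx} {A A' : Tm} (hA : IsHeadRedex A)
    (hA' : IsHeadRedex A') (h : fill E A = fill E' A') : E = E' ∧ A = A' := by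
  induction E generalizing E' with
  | hole =>
    simp only [fill] at h
    subst h
    obtain rfl := eq_hole_of_isHeadRedex_fill hA hA'
    exact ⟨rfl, rfl⟩
  | appL E P ih =>
    cases E' with
    | hole =>
      obtain rfl : fill _ A = A' := h
      cases eq_hole_of_isHeadRedex_fill hA' hA
    | appL E' P' =>
      obtain ⟨hE, rfl⟩ := Tm.app.inj h
      obtain ⟨rfl, rfl⟩ := ih hE
      exact ⟨rfl, rfl⟩
    | _ => simp only [fill, reduceCtorEq] at h
  | pred E ih =>
    cases E' with
    | hole =>
      obtain rfl : fill _ A = A' := h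
      cases eq_hole_of_isHeadRedex_fill hA' hA
    | pred E' =>
      obtain ⟨rfl, rfl⟩ := ih (Tm.pred.inj h)
      exact ⟨rfl, rfl⟩
    | _ => simp only [fill, reduceCtorEq] at h
  | succ E ih =>
    cases E' with
    | hole =>
      obtain rfl : fill _ A = A' := h
      cases eq_hole_of_isHeadRedex_fill hA' hA
    | succ E' =>
      obtain ⟨rfl, rfl⟩ := ih (Tm.succ.inj h)
      exact ⟨rfl, rfl⟩
    | _ => simp only [fill, reduceCtorEq] at h
  | ifz E P Q ih =>
    cases E' with
    | hole =>
      obtain rfl : fill _ A = A' := h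
      cases eq_hole_of_isHeadRedex_fill hA' hA
    | ifz E' P' Q' =>
      obtain ⟨hE, rfl, rfl⟩ := Tm.ifz.inj h
      obtain ⟨rfl, rfl⟩ := ih hE
      exact ⟨rfl, rfl⟩
    | _ => simp only [fill, reduceCtorEq] at h

lemma WhStep.exists_headRedex {M N : Tm} (h : WhStep M N) :
    ∃ E A B, HeadRedex A B ∧ M = fill E A ∧ N = fill E B := by
  obtain ⟨E, A, B, hAB, rfl, rfl⟩ | ⟨E, A, B, hAB, rfl, rfl⟩ := h
  exacts [⟨E, A, B, .inl hAB, rfl, rfl⟩, ⟨E, A, B, .inr hAB, rfl, rfl⟩]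

/-- The weak head reduction of EPCF is deterministic. -/
theorem stmt_0 (M N₁ N₂ : Tm) (h₁ : WhStep M N₁) (h₂ : WhStep M N₂) : N₁ = N₂ := by
  obtain ⟨E, A, B, hAB, rfl, rfl⟩ := h₁.exists_headRedex
  obtain ⟨E', A', B', hAB', hM, rfl⟩ := h₂.exists_headRedex
  obtain ⟨rfl, rfl⟩ := fill_inj_of_isHeadRedex ⟨B, hAB⟩ ⟨B', hAB'⟩ hM
  rw [hAB.unique hAB']
end

section
/- Define the head size |M| of an EPCF term by: |x| = |0| = 1; |M⟨N/x⟩| = |M|·(|N|+1); |M·N| = |λx.M| = |pred M| = |succ M| = |fix M| = |M|+1; |ifz L M N| = |L|+1. Then percolation reduction strictly decreases head size: if M →pr N then |M| > |N|. Consequently, percolation reduction is strongly normalizing. -/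
/-- The head size `|M|` of an EPCF term. -/
def hsize : Tm → ℕ
  | .var _ => 1
  | .zero => 1
  | .esub M _ N => hsize M * (hsize N + 1)
  | .app M _ => hsize M + 1
  | .lam _ M => hsize M + 1
  | .fixp M => hsize M + 1
  | .pred M => hsize M + 1
  | .succ M => hsize M + 1
  | .ifz L _ _ => hsize L + 1

/- Under a list `σ` of explicit substitutions the head size is multiplied by the weight
`w = ∏ (|Nᵢ| + 1)`, which is at least `2` for non-empty `σ` and exceeds every `|σ(x)|`.
A percolation step turns `|M^σ| = |M|·w` into `|σ(x)| < w` or into at most `(|M| - 1)·w + 1`,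
and evaluation contexts only add to the head size of the hole. Strong normalization follows
since `ℕ` is well founded. -/

def substWeight (σ : Subs) : ℕ := (σ.map fun p => hsize p.2 + 1).prod

lemma substWeight_cons (p : String × Tm) (σ : Subs) :
    substWeight (p :: σ) = (hsize p.2 + 1) * substWeight σ := by
  simp [substWeight]

lemma hsize_pos (M : Tm) : 0 < hsize M := by
  induction M <;> simp only [hsize] <;> positivity

lemma hsize_applySubs (M : Tm) (σ : Subs) :
    hsize (applySubs M σ) = hsize M * substWeight σ := by
  induction σ generalizing M with
  | nil => simp [applySubs, substWeight]
  | cons p σ ih =>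
      simp only [applySubs, ih, substWeight_cons, hsize]
      ring

lemma substWeight_pos (σ : Subs) : 0 < substWeight σ :=
  List.prod_pos fun _ h => by obtain ⟨_, _, rfl⟩ := List.mem_map.1 h; omega

lemma one_lt_substWeight {σ : Subs} (hσ : σ ≠ []) : 1 < substWeight σ := by
  obtain ⟨p, σ, rfl⟩ := List.exists_cons_of_ne_nil hσ
  rw [substWeight_cons]
  nlinarith [hsize_pos p.2, substWeight_pos σ]

lemma hsize_lt_substWeight_of_lookupS {x : String} {N : Tm} {σ : Subs}
    (h : lookupS x σ = some N) : hsize N < substWeight σ := by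
  induction σ with
  | nil => simp [lookupS] at h
  | cons p σ ih =>
      rw [substWeight_cons]
      by_cases hx : x = p.1
      · obtain rfl : p.2 = N := by simpa [lookupS, hx] using h
        nlinarith [substWeight_pos σ]
      · have := ih (by simpa [lookupS, hx] using h)
        nlinarith

lemma hsize_lt_of_prRedex {A B : Tm} (h : PrRedex A B) : hsize B < hsize A := by
  have hw : ∀ σ : Subs, σ ≠ [] → ∀ a, a * substWeight σ + 1 < (a + 1) * substWeight σ :=
    fun σ hσ a => by nlinarith [one_lt_substWeight hσ]
  cases h with
  | var_hit x N σ _ _ hx =>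
      simpa [hsize_applySubs, hsize] using hsize_lt_substWeight_of_lookupS hx
  | var_miss x σ hσ _ _ => simpa [hsize_applySubs, hsize] using one_lt_substWeight hσ
  | zeroS σ hσ _ => simpa [hsize_applySubs, hsize] using one_lt_substWeight hσ
  | appS M N σ hσ _ => simpa only [hsize_applySubs, hsize] using hw σ hσ (hsize M)
  | predS M σ hσ _ => simpa only [hsize_applySubs, hsize] using hw σ hσ (hsize M)
  | succS M σ hσ _ => simpa only [hsize_applySubs, hsize] using hw σ hσ (hsize M)
  | ifzS L M N σ hσ _ => simpa only [hsize_applySubs, hsize] using hw σ hσ (hsize L)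
  | fixS M σ hσ _ => simpa only [hsize_applySubs, hsize] using hw σ hσ (hsize M)

lemma hsize_fill_lt_fill (E : ECtx) {A B : Tm} (h : hsize B < hsize A) :
    hsize (fill E B) < hsize (fill E A) := by
  induction E with
  | hole => exact h
  | appL E P ih | pred E ih | succ E ih | ifz E P Q ih =>
    simpa only [fill, hsize, add_lt_add_iff_right]

lemma hsize_lt_of_prStep {M N : Tm} (h : PrStep M N) : hsize N < hsize M := by
  obtain ⟨E, A, B, hAB, rfl, rfl⟩ := h
  exact hsize_fill_lt_fill E (hsize_lt_of_prRedex hAB)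

/-- Percolation reduction strictly decreases the head size; consequently it is
strongly normalizing (there is no infinite `→pr` reduction sequence). -/
theorem stmt_1 :
    (∀ M N : Tm, PrStep M N → hsize N < hsize M) ∧
    (∀ f : ℕ → Tm, ¬ ∀ n, PrStep (f n) (f (n + 1))) := by
  refine ⟨fun _ _ => hsize_lt_of_prStep, fun f hf => ?_⟩
  obtain ⟨n, hn⟩ := WellFounded.not_rel_apply_succ (r := (· < ·)) (hsize ∘ f)
  exact hn (hsize_lt_of_prStep (hf n))
end

section
/- The fixed-point machine unfolds correctly: for every address a, Y@[a] reduces in exactly 5 steps to #⁻¹(a)@[#(Y@[a])], i.e., applying Y to a yields the machine at address a applied to the address of Y@[a] itself. -/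
/-- Programs of extended addressing machines. -/
inductive Prog : Type
  | eps : Prog
  | call : ℕ → Prog
  | load : ℕ → Prog → Prog
  | appI : ℕ → ℕ → ℕ → Prog → Prog
  | test : ℕ → ℕ → ℕ → ℕ → Prog → Prog
  | predI : ℕ → ℕ → Prog → Prog
  | succI : ℕ → ℕ → Prog → Prog

/-- An extended addressing machine over a type `A` of addresses:
registers (holding an address or `∅`), a program and an input tape. -/
structure EAM (A : Type*) where
  regs : List (Option A)
  prog : Prog
  tape : List A

/-- `M@T'`: the machine `M` with its tape extended by `T'`. -/
def appT {A : Type*} (M : EAM A) (T : List A) : EAM A :=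
  ⟨M.regs, M.prog, M.tape ++ T⟩

/-- Update register `i` (a no-op if the register does not exist). -/
def setReg {A : Type*} (R : List (Option A)) (i : ℕ) (a : A) : List (Option A) :=
  R.set i (some a)

/-- The application map on addresses: `a · b = #(#⁻¹(a)@[b])`. -/
def appMap {A : Type*} (tbl : EAM A ≃ A) (a b : A) : A :=
  tbl (appT (tbl.symm a) [b])

/-- The `n`-th numeral machine `n̄ = ⟨R₀ = n, ε, []⟩`. -/
def numMach {A : Type*} (ι : ℕ → A) (n : ℕ) : EAM A :=
  ⟨[some (ι n)], .eps, []⟩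

/-- The machine `Y^a`. -/
def Ymach {A : Type*} (a : A) : EAM A :=
  ⟨[none, none],
   .load 0 (.load 1 (.appI 0 1 0 (.appI 1 0 1 (.call 1)))), [a]⟩

/-- Small-step operational semantics of extended addressing machines, with
respect to an identification `ι` of ℕ inside the addresses and a bijective
address table map `tbl`. -/
inductive Step {A : Type*} (ι : ℕ → A) (tbl : EAM A ≃ A) : EAM A → EAM A → Prop
  | call (R : List (Option A)) (i : ℕ) (T : List A) (a : A) :
      R.getD i none = some a →
      Step ι tbl ⟨R, .call i, T⟩ (appT (tbl.symm a) T)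
  | load (R : List (Option A)) (i : ℕ) (P : Prog) (a : A) (T : List A) :
      Step ι tbl ⟨R, .load i P, a :: T⟩ ⟨setReg R i a, P, T⟩
  | appI (R : List (Option A)) (i j k : ℕ) (P : Prog) (T : List A) (a b : A) :
      R.getD i none = some a → R.getD j none = some b →
      Step ι tbl ⟨R, .appI i j k P, T⟩ ⟨setReg R k (appMap tbl a b), P, T⟩
  | predNum (R : List (Option A)) (i j : ℕ) (P : Prog) (T : List A) (n : ℕ) :
      R.getD i none = some (ι n) →
      Step ι tbl ⟨R, .predI i j P, T⟩ ⟨setReg R j (ι (n - 1)), P, T⟩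
  | succNum (R : List (Option A)) (i j : ℕ) (P : Prog) (T : List A) (n : ℕ) :
      R.getD i none = some (ι n) →
      Step ι tbl ⟨R, .succI i j P, T⟩ ⟨setReg R j (ι (n + 1)), P, T⟩
  | testZero (R : List (Option A)) (i j k l : ℕ) (P : Prog) (T : List A) (b : A) :
      R.getD i none = some (ι 0) → R.getD j none = some b →
      Step ι tbl ⟨R, .test i j k l P, T⟩ ⟨setReg R l b, P, T⟩
  | testPos (R : List (Option A)) (i j k l : ℕ) (P : Prog) (T : List A) (n : ℕ) (c : A) :
      R.getD i none = some (ι (n + 1)) → R.getD k none = some c →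
      Step ι tbl ⟨R, .test i j k l P, T⟩ ⟨setReg R l c, P, T⟩
  | predMach (R : List (Option A)) (i j : ℕ) (P : Prog) (T : List A) (a : A) (M' : EAM A) :
      R.getD i none = some a → (∀ n, a ≠ ι n) →
      Step ι tbl (tbl.symm a) M' →
      Step ι tbl ⟨R, .predI i j P, T⟩ ⟨setReg R i (tbl M'), .predI i j P, T⟩
  | succMach (R : List (Option A)) (i j : ℕ) (P : Prog) (T : List A) (a : A) (M' : EAM A) :
      R.getD i none = some a → (∀ n, a ≠ ι n) →
      Step ι tbl (tbl.symm a) M' →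
      Step ι tbl ⟨R, .succI i j P, T⟩ ⟨setReg R i (tbl M'), .succI i j P, T⟩
  | testMach (R : List (Option A)) (i j k l : ℕ) (P : Prog) (T : List A) (a : A) (M' : EAM A) :
      R.getD i none = some a → (∀ n, a ≠ ι n) →
      Step ι tbl (tbl.symm a) M' →
      Step ι tbl ⟨R, .test i j k l P, T⟩ ⟨setReg R i (tbl M'), .test i j k l P, T⟩

/-- Multistep reduction of EAMs. -/
def Steps {A : Type*} (ι : ℕ → A) (tbl : EAM A ≃ A) : EAM A → EAM A → Prop :=
  Relation.ReflTransGen (Step ι tbl)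

/-- Reduction in exactly `n` steps. -/
def StepN {A : Type*} (ι : ℕ → A) (tbl : EAM A ≃ A) : ℕ → EAM A → EAM A → Prop
  | 0, M, N => M = N
  | n + 1, M, N => ∃ K, Step ι tbl M K ∧ StepN ι tbl n K N

/- The trace of `Y^y @[a]`: load `y` and `a`, set `R₀ := y · a`, then `R₁ := a · (y · a)`, and
call `R₁`. -/
theorem Ymach_appT_stepN {A : Type*} (ι : ℕ → A) (tbl : EAM A ≃ A) (y a : A) :
    StepN ι tbl 5 (appT (Ymach y) [a])
      (appT (tbl.symm (appMap tbl a (appMap tbl y a))) []) :=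
  ⟨_, Step.load _ 0 _ y [a],
    ⟨_, Step.load _ 1 _ a [],
      ⟨_, Step.appI _ 0 1 0 _ [] y a rfl rfl,
        ⟨_, Step.appI _ 1 0 1 _ [] a _ rfl rfl,
          ⟨_, Step.call _ 1 [] _ rfl, rfl⟩⟩⟩⟩⟩

theorem appT_nil {A : Type*} (M : EAM A) : appT M [] = M := by
  simp [appT]

theorem symm_appMap {A : Type*} (tbl : EAM A ≃ A) (a b : A) :
    tbl.symm (appMap tbl a b) = appT (tbl.symm a) [b] :=
  tbl.symm_apply_apply _

/-- The fixed-point machine unfolds correctly: if `𝐘 = Y^{y0}` has address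
`y0`, then for every address `a`, `𝐘@[a]` reduces in exactly 5 steps to
`#⁻¹(a)@[#(𝐘@[a])]`. -/
theorem stmt_18 {A : Type} (ι : ℕ → A) (tbl : EAM A ≃ A)
    (y0 : A) (hy0 : tbl (Ymach y0) = y0) (a : A) :
    StepN ι tbl 5 (appT (Ymach y0) [a])
      (appT (tbl.symm a) [tbl (appT (Ymach y0) [a])]) := by
  have hY : tbl.symm y0 = Ymach y0 := tbl.symm_apply_eq.mpr hy0.symm
  have hself : appMap tbl y0 a = tbl (appT (Ymach y0) [a]) := by rw [appMap, hY]
  simpa only [appT_nil, symm_appMap, hself] using Ymach_appT_stepN ι tbl y0 a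
end

section
/- The applier machines compose applications correctly: for all addresses a, d₁,…,d_k, e₁,…,e_n, the machine App_{n,k}@[a, d₁,…,d_k, e₁,…,e_n] reduces in exactly (3k+4)·n + 2 steps to #⁻¹(a)@[d₁·e₁⋯e_n, …, d_k·e₁⋯e_n]. -/
/-- The identity machine `I`. -/
def Imach {A : Type*} : EAM A := ⟨[none], .load 0 (.call 0), []⟩

/-- The program of the machine `App_{n+1,k}`:
`Load(1,…,k+2); App 2 (k+2) 2; …; App (k+1) (k+2) (k+1);
 App 0 1 0; …; App 0 (k+1) 0; Call 0`. -/
def appProg (k : ℕ) : Prog :=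
  (List.range (k + 2)).foldr (fun m P => .load (m + 1) P)
    ((List.range k).foldr (fun m P => .appI (m + 2) (k + 2) (m + 2) P)
      ((List.range (k + 1)).foldr (fun m P => .appI 0 (m + 1) 0 P) (.call 0)))

/-- The applier machines `App_{n,k}`. -/
def appMach {A : Type*} (tbl : EAM A ≃ A) : ℕ → ℕ → EAM A
  | 0, _ => Imach
  | n + 1, k =>
      ⟨some (tbl (appMach tbl n k)) :: List.replicate (k + 2) none, appProg k, []⟩

/-!
One run of `App_{n+1,k}` on `a, d₁, …, d_k, e₁, …` loads `a, d₁, …, d_k, e₁` into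
`R₁, …, R_{k+2}`, replaces each `dᵢ` by `dᵢ·e₁` (`k` steps), accumulates
`#App_{n,k} · a · d₁e₁ ⋯ d_ke₁` in `R₀` (`k + 1` steps) and calls it. Since
`#⁻¹(c·x₁⋯x_m) = #⁻¹(c)@[x₁, …, x_m]`, this lands after `3k + 4` steps in
`App_{n,k}@[a, d₁e₁, …, d_ke₁, e₂, …]`, and the induction on `n` ends with the two steps of
`I = App_{0,k}`.
-/

namespace StepN

variable {A : Type*} {ι : ℕ → A} {tbl : EAM A ≃ A}

theorem trans {m n : ℕ} {M K N : EAM A} (h₁ : StepN ι tbl m M K) (h₂ : StepN ι tbl n K N) :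
    StepN ι tbl (m + n) M N := by
  induction m generalizing M with
  | zero => rw [StepN] at h₁; subst h₁; simpa using h₂
  | succ m ih =>
    obtain ⟨L, hML, hLK⟩ := h₁
    rw [Nat.succ_add]
    exact ⟨L, hML, ih hLK⟩

theorem tail {n : ℕ} {M K N : EAM A} (h : StepN ι tbl n M K) (hKN : Step ι tbl K N) :
    StepN ι tbl (n + 1) M N :=
  h.trans ⟨N, hKN, rfl⟩

end StepN

section Registers

variable {α : Type*}

theorem getD_append_cons_of_length_eq {l : List (Option α)} {i : ℕ} (hi : l.length = i)
    (x : Option α) (suf : List (Option α)) : (l ++ x :: suf).getD i none = x := by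
  subst hi; simp

theorem setReg_append_cons_of_length_eq {l : List (Option α)} {i : ℕ} (hi : l.length = i)
    (x : Option α) (suf : List (Option α)) (a : α) :
    setReg (l ++ x :: suf) i a = l ++ some a :: suf := by
  subst hi; simp [setReg]

end Registers

theorem appT_appT {A : Type*} (M : EAM A) (T T' : List A) :
    appT (appT M T) T' = appT M (T ++ T') := by
  simp [appT]

theorem symm_foldl_appMap {A : Type*} (tbl : EAM A ≃ A) (xs : List A) (a : A) :
    tbl.symm (xs.foldl (appMap tbl) a) = appT (tbl.symm a) xs := by
  induction xs generalizing a with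
  | nil => simp [appT]
  | cons x xs ih => rw [List.foldl_cons, ih, appMap, Equiv.symm_apply_apply, appT_appT]; rfl

section Machines

variable {A : Type*} {ι : ℕ → A} {tbl : EAM A ≃ A}

theorem stepN_loads {pre : List (Option A)} {s : ℕ} (hs : pre.length = s) (ts : List A)
    (suf : List (Option A)) (P : Prog) (rest : List A) :
    StepN ι tbl ts.length
      ⟨pre ++ List.replicate ts.length none ++ suf,
        (List.range ts.length).foldr (fun m Q => .load (m + s) Q) P, ts ++ rest⟩
      ⟨pre ++ ts.map some ++ suf, P, rest⟩ := by
  induction ts using List.reverseRecOn generalizing suf P rest with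
  | nil => rfl
  | append_singleton ts t ih =>
    have hlen : (pre ++ ts.map some).length = ts.length + s := by simp [hs, add_comm]
    have h := (ih (none :: suf) (.load (ts.length + s) P) (t :: rest)).tail (Step.load _ _ _ _ _)
    rw [setReg_append_cons_of_length_eq hlen] at h
    simpa [List.range_succ, List.replicate_succ'] using h

theorem stepN_appIs_map {pre : List (Option A)} {s : ℕ} (hs : pre.length = s) (xs : List A)
    (suf : List (Option A)) {i j : ℕ} (hj : s + xs.length + i = j) {e : A}
    (he : suf.getD i none = some e) (P : Prog) (T : List A) :
    StepN ι tbl xs.length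
      ⟨pre ++ xs.map some ++ suf,
        (List.range xs.length).foldr (fun m Q => .appI (m + s) j (m + s) Q) P, T⟩
      ⟨pre ++ (xs.map (appMap tbl · e)).map some ++ suf, P, T⟩ := by
  induction xs using List.reverseRecOn generalizing suf i P with
  | nil => rfl
  | append_singleton xs x ih =>
    have hj' : s + xs.length + (i + 1) = j := by
      rw [List.length_append, List.length_singleton] at hj; omega
    have hlen : (pre ++ (xs.map (appMap tbl · e)).map some).length = xs.length + s := by
      simp [hs, add_comm]
    have he' : (pre ++ (xs.map (appMap tbl · e)).map some ++ some x :: suf).getD j none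
        = some e := by
      rw [List.getD_append_right _ _ _ _ (by omega), hlen,
        show j - (xs.length + s) = i + 1 by omega]
      exact he
    have h := (ih (some x :: suf) hj' he (.appI (xs.length + s) j (xs.length + s) P)).tail
      (Step.appI _ _ j _ P T x e (getD_append_cons_of_length_eq hlen (some x) suf) he')
    rw [setReg_append_cons_of_length_eq hlen] at h
    simpa [List.range_succ] using h

theorem stepN_appIs_foldl (c : A) (pre : List (Option A)) {s : ℕ} (hs : pre.length + 1 = s)
    (xs : List A) (suf : List (Option A)) (P : Prog) (T : List A) :
    StepN ι tbl xs.length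
      ⟨some c :: (pre ++ xs.map some ++ suf),
        (List.range xs.length).foldr (fun m Q => .appI 0 (m + s) 0 Q) P, T⟩
      ⟨some (xs.foldl (appMap tbl) c) :: (pre ++ xs.map some ++ suf), P, T⟩ := by
  induction xs using List.reverseRecOn generalizing suf P with
  | nil => rfl
  | append_singleton xs x ih =>
    have hlen : (some (xs.foldl (appMap tbl) c) :: (pre ++ xs.map some)).length
        = xs.length + s := by
      simp only [List.length_cons, List.length_append, List.length_map]; omega
    have h := (ih (some x :: suf) (.appI 0 (xs.length + s) 0 P)).tail
      (Step.appI _ 0 (xs.length + s) 0 P T _ x rfl ?_)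
    · simpa [List.range_succ, setReg] using h
    · simpa using getD_append_cons_of_length_eq hlen (some x) suf

theorem stepN_Imach (a : A) (T : List A) :
    StepN ι tbl 2 (appT Imach (a :: T)) (appT (tbl.symm a) T) :=
  ⟨_, Step.load [none] 0 (.call 0) a T, _, Step.call _ 0 T a rfl, rfl⟩

theorem stepN_appMach_succ (n : ℕ) (a e : A) (ds rest : List A) :
    StepN ι tbl (3 * ds.length + 4)
      (appT (appMach tbl (n + 1) ds.length) (a :: (ds ++ e :: rest)))
      (appT (appMach tbl n ds.length) (a :: (ds.map (appMap tbl · e) ++ rest))) := by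
  set k := ds.length
  set c := tbl (appMach tbl n k)
  set ds' := ds.map (appMap tbl · e)
  set P₂ : Prog := (List.range (k + 1)).foldr (fun m P => .appI 0 (m + 1) 0 P) (.call 0)
  set P₁ : Prog := (List.range k).foldr (fun m P => .appI (m + 2) (k + 2) (m + 2) P) P₂
  have hload : StepN ι tbl (k + 2) (appT (appMach tbl (n + 1) k) (a :: (ds ++ e :: rest)))
      ⟨some c :: some a :: (ds.map some ++ [some e]), P₁, rest⟩ := by
    simpa [appMach, appProg, appT, k] using
      stepN_loads (ι := ι) (tbl := tbl) (pre := [some c]) rfl (a :: ds ++ [e]) [] P₁ rest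
  have happ₁ : StepN ι tbl k ⟨some c :: some a :: (ds.map some ++ [some e]), P₁, rest⟩
      ⟨some c :: some a :: (ds'.map some ++ [some e]), P₂, rest⟩ :=
    stepN_appIs_map (pre := [some c, some a]) (s := 2) rfl ds [some e] (i := 0) (j := k + 2)
      (by omega) rfl P₂ rest
  have happ₂ : StepN ι tbl (k + 1) ⟨some c :: some a :: (ds'.map some ++ [some e]), P₂, rest⟩
      ⟨some ((a :: ds').foldl (appMap tbl) c) :: some a :: (ds'.map some ++ [some e]), .call 0,
        rest⟩ := by
    have h := stepN_appIs_foldl (ι := ι) (tbl := tbl) c [] (s := 1) rfl (a :: ds') [some e]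
      (.call 0) rest
    rwa [show (a :: ds').length = k + 1 by simp [ds', k]] at h
  have hcall : Step ι tbl
      ⟨some ((a :: ds').foldl (appMap tbl) c) :: some a :: (ds'.map some ++ [some e]), .call 0,
        rest⟩ (appT (appMach tbl n k) (a :: (ds' ++ rest))) := by
    have hjump : appT (tbl.symm ((a :: ds').foldl (appMap tbl) c)) rest
        = appT (appMach tbl n k) (a :: (ds' ++ rest)) := by
      rw [symm_foldl_appMap, Equiv.symm_apply_apply, appT_appT]; rfl
    exact hjump ▸ Step.call _ 0 rest _ rfl
  convert ((hload.trans happ₁).trans happ₂).tail hcall using 1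
  omega

theorem stepN_appMach (a : A) (ds es : List A) :
    StepN ι tbl ((3 * ds.length + 4) * es.length + 2)
      (appT (appMach tbl es.length ds.length) (a :: (ds ++ es)))
      (appT (tbl.symm a) (ds.map fun d => es.foldl (appMap tbl) d)) := by
  induction es generalizing ds with
  | nil => simpa [appMach] using stepN_Imach a ds
  | cons e es ih =>
    have hrest := ih (ds.map (appMap tbl · e))
    rw [List.length_map, List.map_map] at hrest
    rw [List.length_cons, show (3 * ds.length + 4) * (es.length + 1) + 2
      = 3 * ds.length + 4 + ((3 * ds.length + 4) * es.length + 2) by ring]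
    exact (stepN_appMach_succ es.length a e ds es).trans hrest

end Machines

theorem stmt_19_general {A : Type} (ι : ℕ → A) (tbl : EAM A ≃ A) (n k : ℕ)
    (a : A) (ds es : List A)
    (hd : ds.length = k) (he : es.length = n) :
    StepN ι tbl ((3 * k + 4) * n + 2)
      (appT (appMach tbl n k) (a :: (ds ++ es)))
      (appT (tbl.symm a) (ds.map fun d => es.foldl (appMap tbl) d)) := by
  subst hd he
  exact stepN_appMach a ds es

/-- The applier machines compose applications correctly:
`App_{n,k}@[a,d₁,…,d_k,e₁,…,e_n]` reduces in exactly `(3k+4)·n + 2` steps to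
`#⁻¹(a)@[d₁·e₁⋯e_n, …, d_k·e₁⋯e_n]`. -/
theorem stmt_19 {A : Type} (ι : ℕ → A) (tbl : EAM A ≃ A) (n k : ℕ)
    (hk : 0 < k) (a : A) (ds es : List A)
    (hd : ds.length = k) (he : es.length = n) :
    StepN ι tbl ((3 * k + 4) * n + 2)
      (appT (appMach tbl n k) (a :: (ds ++ es)))
      (appT (tbl.symm a) (ds.map fun d => es.foldl (appMap tbl) d)) :=
  stmt_19_general ι tbl n k a ds es hd he
end
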